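/- arXiv:2405.18134 — 2 statements merged into one kernel-verified Lean document; each statement's English description precedes it below -/
import Mathlib

section
/- In the lower-bound construction, there exist a subset F of the edges of the augmented graph G with maximum degree at most f (namely all edges of G with both endpoints in B_0) and two points b_0, b_f ∈ S such that the shortest-path distance between b_0 and b_f in G \ F is at least f times the shortest-path distance between b_0 and b_f in K_S \ F. Hence the stretch factor of the construction is Ω(f·t) in general. -/
/-!
`K_S \ F` keeps the edge `b 0 b f`, of `dH`-length `1 + ε`, because `G` does not contain it.
In `G \ F` every edge lies in a single cell `B i ∪ {b (i - 1), b i}` and meets `B i`: edges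
between two points `b j` lie in `F`, and a point of `C a c` outside the cell of the edge `ac`
would be beaten by one of the `2 f` points of the cluster `B i`. Leaving a cluster costs
`dH ≥ 1`, so the potential equal to `2 i - 1` on `B i` and to `2 j` at `b j` changes by at most
`dH` along every edge of `G \ F`, and every `b 0`–`b f` path in `G \ F` has length at least
`2 f ≥ f (1 + ε)`. All lower bounds on `dH` come from potentials that are constant on each
cluster and `wt`-Lipschitz along the edges of `H`.
-/

open Real

/-- Length of a walk in a graph whose vertices lie in a metric space:
the sum of the metric distances of consecutive vertices. -/
noncomputable def wlen {V : Type*} [PseudoMetricSpace V] {G : SimpleGraph V} {u v : V}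
    (w : G.Walk u v) : ℝ :=
  (w.darts.map fun d : G.Dart => dist d.toProd.1 d.toProd.2).sum

/-- Shortest-path distance between two vertices of a metrically weighted graph. -/
noncomputable def gdist {V : Type*} [PseudoMetricSpace V] (G : SimpleGraph V) (p q : V) : ℝ :=
  sInf {l : ℝ | ∃ w : G.Walk p q, wlen w = l}

/-- The set `F` of edges, viewed as a graph, has maximum degree at most `f`. -/
def maxDegLe {V : Type*} (F : Set (Sym2 V)) (f : ℕ) : Prop :=
  ∀ v : V, {e | e ∈ F ∧ v ∈ e}.encard ≤ (f : ℕ∞)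

/-- Length of a walk in an edge-weighted graph: the sum of the weights of its edges. -/
noncomputable def wlenW {V : Type*} (wt : V → V → ℝ) {G : SimpleGraph V} {u v : V}
    (w : G.Walk u v) : ℝ :=
  (w.darts.map fun d : G.Dart => wt d.toProd.1 d.toProd.2).sum

/-- Shortest-path distance between two vertices of an edge-weighted graph. -/
noncomputable def gdistW {V : Type*} (G : SimpleGraph V) (wt : V → V → ℝ) (p q : V) : ℝ :=
  sInf {l : ℝ | ∃ w : G.Walk p q, wlenW wt w = l}

section WeightedWalks

variable {V : Type*} {G : SimpleGraph V} {W : V → V → ℝ}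

@[simp] lemma wlenW_nil {p : V} : wlenW W (SimpleGraph.Walk.nil : G.Walk p p) = 0 := by
  simp [wlenW]

@[simp] lemma wlenW_cons {p u q : V} (h : G.Adj p u) (w : G.Walk u q) :
    wlenW W (SimpleGraph.Walk.cons h w) = W p u + wlenW W w := by
  simp [wlenW]

lemma wlenW_reverse (hW : ∀ x y, W x y = W y x) {p q : V} (w : G.Walk p q) :
    wlenW W w.reverse = wlenW W w := by
  simp only [wlenW, SimpleGraph.Walk.darts_reverse, List.map_reverse, List.sum_reverse,
    List.map_map]
  congr 2
  ext d
  exact hW _ _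

lemma gdistW_comm (hW : ∀ x y, W x y = W y x) (p q : V) :
    gdistW G W p q = gdistW G W q p := by
  have key : ∀ {p q : V}, {l | ∃ w : G.Walk p q, wlenW W w = l} ⊆
      {l | ∃ w : G.Walk q p, wlenW W w = l} :=
    fun ⟨w, hw⟩ => ⟨w.reverse, (wlenW_reverse hW w).trans hw⟩
  exact congrArg sInf (key.antisymm key)

lemma wlenW_nonneg (hW : ∀ x y, G.Adj x y → 0 ≤ W x y) {p q : V} (w : G.Walk p q) :
    0 ≤ wlenW W w := by
  induction w with
  | nil => simp
  | cons h _ ih => rw [wlenW_cons]; exact add_nonneg (hW _ _ h) ih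

lemma abs_sub_le_wlenW {ψ : V → ℝ} (hψ : ∀ x y, G.Adj x y → |ψ x - ψ y| ≤ W x y)
    {p q : V} (w : G.Walk p q) : |ψ p - ψ q| ≤ wlenW W w := by
  induction w with
  | nil => simp
  | @cons p u q h _ ih =>
    rw [wlenW_cons]
    exact (abs_sub_le _ (ψ u) _).trans (add_le_add (hψ _ _ h) ih)

lemma gdistW_le_wlenW (hW : ∀ x y, G.Adj x y → 0 ≤ W x y) {p q : V} (w : G.Walk p q) :
    gdistW G W p q ≤ wlenW W w :=
  csInf_le ⟨0, by rintro l ⟨w', rfl⟩; exact wlenW_nonneg hW w'⟩ ⟨w, rfl⟩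

lemma gdistW_le_of_adj (hW : ∀ x y, G.Adj x y → 0 ≤ W x y) {p q : V} (h : G.Adj p q) :
    gdistW G W p q ≤ W p q := by
  simpa using gdistW_le_wlenW hW (SimpleGraph.Walk.cons h SimpleGraph.Walk.nil)

lemma gdistW_self_nonpos (hW : ∀ x y, G.Adj x y → 0 ≤ W x y) (p : V) : gdistW G W p p ≤ 0 := by
  simpa using gdistW_le_wlenW hW (SimpleGraph.Walk.nil : G.Walk p p)

lemma gdistW_nonneg (hW : ∀ x y, G.Adj x y → 0 ≤ W x y) (p q : V) : 0 ≤ gdistW G W p q :=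
  Real.sInf_nonneg (by rintro l ⟨w, rfl⟩; exact wlenW_nonneg hW w)

lemma abs_sub_le_gdistW {ψ : V → ℝ} (hψ : ∀ x y, G.Adj x y → |ψ x - ψ y| ≤ W x y)
    {p q : V} (hpq : G.Reachable p q) : |ψ p - ψ q| ≤ gdistW G W p q :=
  le_csInf (hpq.elim fun w => ⟨_, w, rfl⟩) (by rintro l ⟨w, rfl⟩; exact abs_sub_le_wlenW hψ w)

lemma le_gdistW_of_ne {c : ℝ} (hc : 0 ≤ c) (hW : ∀ x y, G.Adj x y → c ≤ W x y) {p q : V}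
    (hpq : G.Reachable p q) (hne : p ≠ q) : c ≤ gdistW G W p q := by
  classical
  have hψ : ∀ x y, G.Adj x y →
      |(if x = p then c else 0) - (if y = p then c else 0)| ≤ W x y := by
    intro x y h
    refine le_trans ?_ (hW x y h)
    split_ifs <;> simp [abs_of_nonneg hc, hc]
  simpa [hne.symm, abs_of_nonneg hc] using abs_sub_le_gdistW hψ hpq

end WeightedWalks

lemma reachable_b_of_chain {V : Type*} {K : SimpleGraph V} {b : ℕ → V} {B : ℕ → Set V} {f : ℕ}
    (hB : ∀ i, 1 ≤ i → i ≤ f → (B i).Nonempty)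
    (hK : ∀ i, 1 ≤ i → i ≤ f → ∀ x ∈ B i, K.Adj (b (i - 1)) x ∧ K.Adj x (b i)) :
    ∀ j ≤ f, K.Reachable (b 0) (b j)
  | 0, _ => .rfl
  | j + 1, hj => by
    obtain ⟨x, hx⟩ := hB (j + 1) (by omega) hj
    obtain ⟨h₁, h₂⟩ := hK (j + 1) (by omega) hj x hx
    exact (reachable_b_of_chain hB hK j (by omega)).trans (h₁.reachable.trans h₂.reachable)

lemma maxDegLe_of_subset_edgeSet {V : Type*} (G : SimpleGraph V) {F : Set (Sym2 V)}
    {T : Set V} {f : ℕ} (hFG : F ⊆ G.edgeSet) (hFT : ∀ e ∈ F, ∀ v ∈ e, v ∈ T)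
    (hT : T.encard ≤ f + 1) : maxDegLe F f := by
  intro v
  by_cases hv : v ∈ T
  · have hsub : {e | e ∈ F ∧ v ∈ e} ⊆ (fun w => s(v, w)) '' (T \ {v}) := by
      rintro e ⟨he, hve⟩
      obtain ⟨w, rfl⟩ := Sym2.mem_iff_exists.mp hve
      refine ⟨w, ⟨hFT _ he w (Sym2.mem_mk_right v w), ?_⟩, rfl⟩
      rintro rfl
      exact G.irrefl (hFG he)
    calc {e | e ∈ F ∧ v ∈ e}.encard ≤ (T \ {v}).encard :=
          (Set.encard_le_encard hsub).trans (Set.encard_image_le _ _)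
      _ = T.encard - 1 := Set.encard_sdiff_singleton_of_mem hv
      _ ≤ f := tsub_le_iff_right.mpr hT
  · have hempty : {e | e ∈ F ∧ v ∈ e} = ∅ :=
      Set.eq_empty_of_forall_notMem fun e ⟨he, hve⟩ => hv (hFT e he v hve)
    simp [hempty]

/-- `G` arises from `G'` by joining both ends of every edge `ac` of `G'` to each point of
`C a c`, a set of `k` points none of which is farther, in `d a · + d · c`, than a point
outside `C a c ∪ {a, c}`. -/
structure IsNearestAugmentation {V : Type*} (G' : SimpleGraph V) (d : V → V → ℝ) (k : ℕ)
    (C : V → V → Set V) (G : SimpleGraph V) : Prop where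
  symm : ∀ a c, C a c = C c a
  ncard_eq : ∀ a c, G'.Adj a c → (C a c).ncard = k
  add_le : ∀ a c, G'.Adj a c → ∀ z ∈ C a c, ∀ x : V, x ≠ a → x ≠ c → x ∉ C a c →
    d a z + d z c ≤ d a x + d x c
  adj_iff : ∀ x y : V, G.Adj x y ↔ G'.Adj x y ∨ ∃ a c : V, G'.Adj a c ∧
    ((x = a ∧ y ∈ C a c) ∨ (x = c ∧ y ∈ C a c) ∨ (y = a ∧ x ∈ C a c) ∨ (y = c ∧ x ∈ C a c))

namespace IsNearestAugmentation

variable {V : Type*} {G' G : SimpleGraph V} {d : V → V → ℝ} {k : ℕ} {C : V → V → Set V}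

lemma adj_cases (hA : IsNearestAugmentation G' d k C G) {x y : V} (h : G.Adj x y) :
    G'.Adj x y ∨ (∃ c, G'.Adj x c ∧ y ∈ C x c) ∨ ∃ c, G'.Adj y c ∧ x ∈ C y c := by
  rcases (hA.adj_iff x y).1 h with h | ⟨a, c, hac, ⟨rfl, hy⟩ | ⟨rfl, hy⟩ | ⟨rfl, hx⟩ | ⟨rfl, hx⟩⟩
  · exact .inl h
  · exact .inr (.inl ⟨c, hac, hy⟩)
  · exact .inr (.inl ⟨a, hac.symm, hA.symm a x ▸ hy⟩)
  · exact .inr (.inr ⟨c, hac, hx⟩)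
  · exact .inr (.inr ⟨a, hac.symm, hA.symm a y ▸ hx⟩)

/-- `k` candidates other than `a, c` include one outside `C a c`, which a point of `C a c` must
beat. -/
lemma add_le_of_le_ncard [Finite V] (hA : IsNearestAugmentation G' d k C G) {a c : V}
    (hac : G'.Adj a c) {S : Set V} (haS : a ∉ S) (hcS : c ∉ S) (hS : k ≤ S.ncard) {D : ℝ}
    (hD : ∀ y ∈ S, d a y + d y c ≤ D) {z : V} (hz : z ∈ C a c) (hzS : z ∉ S) :
    d a z + d z c ≤ D := by
  obtain ⟨y, hyS, hyC⟩ : ∃ y ∈ S, y ∉ C a c := by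
    by_contra! hSC
    have := Set.ncard_le_ncard (Set.insert_subset hz hSC) (Set.toFinite _)
    rw [Set.ncard_insert_of_notMem hzS, hA.ncard_eq a c hac] at this
    omega
  exact (hA.add_le a c hac z hz y (ne_of_mem_of_not_mem hyS haS)
    (ne_of_mem_of_not_mem hyS hcS) hyC).trans (hD y hyS)

end IsNearestAugmentation

structure IsLowerBoundGraph {V : Type*} (f : ℕ) (ε : ℝ) (b : ℕ → V) (B : ℕ → Set V)
    (H : SimpleGraph V) (wt : V → V → ℝ) : Prop where
  three_le : 3 ≤ f
  eps_pos : 0 < ε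
  eps_le_one : ε ≤ 1
  b_inj : ∀ i ≤ f, ∀ j ≤ f, b i = b j → i = j
  ncard_B : ∀ i, 1 ≤ i → i ≤ f → (B i).ncard = 2 * f
  disjoint_B : ∀ i j, 1 ≤ i → i ≤ f → 1 ≤ j → j ≤ f → i ≠ j → B i ∩ B j = ∅
  b_notMem_B : ∀ i, 1 ≤ i → i ≤ f → ∀ j ≤ f, b j ∉ B i
  cover : ∀ v : V, (∃ j ≤ f, v = b j) ∨ ∃ i, 1 ≤ i ∧ i ≤ f ∧ v ∈ B i
  adj_iff : ∀ x y : V, H.Adj x y ↔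
    s(x, y) = s(b 0, b f) ∨
    s(x, y) = s(b 0, b 1) ∨
    s(x, y) = s(b (f - 1), b f) ∨
    (∃ j, 1 ≤ j ∧ j ≤ f - 2 ∧ s(x, y) = s(b j, b (j + 1))) ∨
    (∃ i, 1 ≤ i ∧ i ≤ f ∧ x ∈ B i ∧ y ∈ B i ∧ x ≠ y) ∨
    (∃ i, 1 ≤ i ∧ i ≤ f ∧
      ((x ∈ B i ∧ (y = b (i - 1) ∨ y = b i)) ∨ (y ∈ B i ∧ (x = b (i - 1) ∨ x = b i))))
  wt_symm : ∀ x y, wt x y = wt y x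
  wt_b_zero_b_f : wt (b 0) (b f) = 1 + ε
  wt_b_zero_b_one : wt (b 0) (b 1) = 1
  wt_b_pred_b_f : wt (b (f - 1)) (b f) = 1
  wt_spine : ∀ j, 1 ≤ j → j ≤ f - 2 → wt (b j) (b (j + 1)) = ε
  wt_B : ∀ i, 1 ≤ i → i ≤ f → ∀ x ∈ B i, ∀ y ∈ B i, x ≠ y → wt x y = ε
  wt_B_b : ∀ i, 1 ≤ i → i ≤ f → ∀ x ∈ B i, wt x (b (i - 1)) = 1 ∧ wt x (b i) = 1

namespace IsLowerBoundGraph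

variable {V : Type*} {f : ℕ} {ε : ℝ} {b : ℕ → V} {B : ℕ → Set V} {H : SimpleGraph V}
  {wt : V → V → ℝ}

/-- The set `B₀` of the paper. -/
def spine (b : ℕ → V) (f : ℕ) : Set V := {v | ∃ j ≤ f, v = b j}

def spineEdges (G : SimpleGraph V) (b : ℕ → V) (f : ℕ) : Set (Sym2 V) :=
  {e | e ∈ G.edgeSet ∧ ∀ v ∈ e, v ∈ spine b f}

lemma encard_spine_le (b : ℕ → V) (f : ℕ) : (spine b f).encard ≤ f + 1 :=
  calc (spine b f).encard ≤ (b '' Set.Iic f).encard :=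
        Set.encard_le_encard (by rintro _ ⟨j, hj, rfl⟩; exact ⟨j, hj, rfl⟩)
    _ ≤ (Set.Iic f).encard := Set.encard_image_le _ _
    _ = f + 1 := by rw [← Finset.coe_Iic, Set.encard_coe_eq_coe_finsetCard]; simp

lemma maxDegLe_spineEdges (G : SimpleGraph V) (b : ℕ → V) (f : ℕ) :
    maxDegLe (spineEdges G b f) f :=
  maxDegLe_of_subset_edgeSet G (fun _ he => he.1) (fun _ he => he.2) (encard_spine_le b f)

def cell (b : ℕ → V) (B : ℕ → Set V) (i : ℕ) : Set V := insert (b (i - 1)) (insert (b i) (B i))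

lemma mem_cell_of_mem_B {i : ℕ} {x : V} (hx : x ∈ B i) : x ∈ cell b B i :=
  Set.mem_insert_of_mem _ (Set.mem_insert_of_mem _ hx)

lemma b_pred_mem_cell (i : ℕ) : b (i - 1) ∈ cell b B i := Set.mem_insert _ _

lemma b_mem_cell (i : ℕ) : b i ∈ cell b B i := Set.mem_insert_of_mem _ (Set.mem_insert _ _)

lemma eq_b_of_mem_cell {i : ℕ} {v : V} (hv : v ∈ cell b B i) (hvB : v ∉ B i) :
    v = b (i - 1) ∨ v = b i := by
  rcases hv with hv | hv | hv
  exacts [.inl hv, .inr hv, absurd hv hvB]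

open Classical in
noncomputable def blockPotential (f : ℕ) (b : ℕ → V) (B : ℕ → Set V) (β γ : ℕ → ℝ) (v : V) :
    ℝ :=
  if h : ∃ i, 1 ≤ i ∧ i ≤ f ∧ v ∈ B i then β h.choose
  else if h' : ∃ j ≤ f, v = b j then γ h'.choose else 0

def BlockLipschitz (f : ℕ) (ε : ℝ) (β γ : ℕ → ℝ) : Prop :=
  (∀ i, 1 ≤ i → i ≤ f → |β i - γ (i - 1)| ≤ 1 ∧ |β i - γ i| ≤ 1) ∧
  (∀ j, 1 ≤ j → j ≤ f - 2 → |γ j - γ (j + 1)| ≤ ε) ∧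
  |γ 0 - γ 1| ≤ 1 ∧ |γ (f - 1) - γ f| ≤ 1 ∧ |γ 0 - γ f| ≤ 1 + ε

variable (hL : IsLowerBoundGraph f ε b B H wt)
include hL

lemma ne_b_of_mem_B {i j : ℕ} (hi : 1 ≤ i) (hif : i ≤ f) (hj : j ≤ f) {x : V} (hx : x ∈ B i) :
    x ≠ b j := by
  rintro rfl
  exact hL.b_notMem_B i hi hif j hj hx

lemma notMem_spine_of_mem_B {i : ℕ} (hi : 1 ≤ i) (hif : i ≤ f) {x : V} (hx : x ∈ B i) :
    x ∉ spine b f := by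
  rintro ⟨j, hj, rfl⟩
  exact hL.b_notMem_B i hi hif j hj hx

lemma eq_of_mem_B {i m : ℕ} (hi : 1 ≤ i) (hif : i ≤ f) (hm : 1 ≤ m) (hmf : m ≤ f) {x : V}
    (hxi : x ∈ B i) (hxm : x ∈ B m) : i = m := by
  by_contra hne
  simpa [hL.disjoint_B i m hi hif hm hmf hne] using Set.mem_inter hxi hxm

lemma b_mem_cell_iff {i k : ℕ} (hi : 1 ≤ i) (hif : i ≤ f) (hk : k ≤ f) :
    b k ∈ cell b B i ↔ k = i - 1 ∨ k = i := by
  refine ⟨fun h => ?_, by rintro (rfl | rfl); exacts [b_pred_mem_cell _, b_mem_cell _]⟩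
  rcases eq_b_of_mem_cell h (hL.b_notMem_B i hi hif k hk) with h | h
  exacts [.inl (hL.b_inj k hk _ (by omega) h), .inr (hL.b_inj k hk i hif h)]

lemma adj_of_mem_B {i : ℕ} (hi : 1 ≤ i) (hif : i ≤ f) {x : V} (hx : x ∈ B i) :
    H.Adj (b (i - 1)) x ∧ H.Adj x (b i) :=
  ⟨((hL.adj_iff _ _).2 <| .inr <| .inr <| .inr <| .inr <| .inr
      ⟨i, hi, hif, .inl ⟨hx, .inl rfl⟩⟩).symm,
    (hL.adj_iff _ _).2 <| .inr <| .inr <| .inr <| .inr <| .inr ⟨i, hi, hif, .inl ⟨hx, .inr rfl⟩⟩⟩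

lemma forall_adj {P : V → V → Prop} (hP : ∀ x y, P x y → P y x) (h0f : P (b 0) (b f))
    (h01 : P (b 0) (b 1)) (hf : P (b (f - 1)) (b f))
    (hspine : ∀ j, 1 ≤ j → j ≤ f - 2 → P (b j) (b (j + 1)))
    (hB : ∀ i, 1 ≤ i → i ≤ f → ∀ x ∈ B i, ∀ y ∈ B i, x ≠ y → P x y)
    (hBb : ∀ i, 1 ≤ i → i ≤ f → ∀ x ∈ B i, P x (b (i - 1)) ∧ P x (b i))
    {x y : V} (h : H.Adj x y) : P x y := by
  have of_eq : ∀ {u v}, P u v → s(x, y) = s(u, v) → P x y := by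
    intro u v huv e
    rcases Sym2.eq_iff.1 e with ⟨rfl, rfl⟩ | ⟨rfl, rfl⟩
    exacts [huv, hP _ _ huv]
  rcases (hL.adj_iff x y).1 h with e | e | e | ⟨j, hj, hjf, e⟩ | ⟨i, hi, hif, hx, hy, hxy⟩ |
    ⟨i, hi, hif, ⟨hx, rfl | rfl⟩ | ⟨hy, rfl | rfl⟩⟩
  · exact of_eq h0f e
  · exact of_eq h01 e
  · exact of_eq hf e
  · exact of_eq (hspine j hj hjf) e
  · exact hB i hi hif x hx y hy hxy
  · exact (hBb i hi hif x hx).1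
  · exact (hBb i hi hif x hx).2
  · exact hP _ _ (hBb i hi hif y hy).1
  · exact hP _ _ (hBb i hi hif y hy).2

lemma eps_le_wt {x y : V} (h : H.Adj x y) : ε ≤ wt x y := by
  have := hL.eps_pos
  have := hL.eps_le_one
  refine hL.forall_adj (P := fun x y => ε ≤ wt x y) (fun x y h => hL.wt_symm x y ▸ h) ?_ ?_ ?_
    (fun j hj hjf => (hL.wt_spine j hj hjf).ge)
    (fun i hi hif x hx y hy hxy => (hL.wt_B i hi hif x hx y hy hxy).ge)
    (fun i hi hif x hx => by simp only [hL.wt_B_b i hi hif x hx]; exact ⟨this, this⟩) h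
  · linarith [hL.wt_b_zero_b_f]
  · linarith [hL.wt_b_zero_b_one]
  · linarith [hL.wt_b_pred_b_f]

lemma wt_nonneg {x y : V} (h : H.Adj x y) : 0 ≤ wt x y :=
  hL.eps_pos.le.trans (hL.eps_le_wt h)

lemma reachable (p q : V) : H.Reachable p q := by
  have hb := reachable_b_of_chain (K := H)
    (fun i hi hif => Set.nonempty_of_ncard_ne_zero (by rw [hL.ncard_B i hi hif]; omega))
    (fun i hi hif x hx => hL.adj_of_mem_B hi hif hx)
  have hv : ∀ v, H.Reachable (b 0) v := by
    intro v
    rcases hL.cover v with ⟨j, hj, rfl⟩ | ⟨i, hi, hif, hv⟩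
    · exact hb j hj
    · exact (hb i hif).trans (hL.adj_of_mem_B hi hif hv).2.symm.reachable
  exact (hv p).symm.trans (hv q)

lemma dist_comm (x y : V) : gdistW H wt x y = gdistW H wt y x :=
  gdistW_comm hL.wt_symm x y

lemma dist_le_eps_of_mem_B {i : ℕ} (hi : 1 ≤ i) (hif : i ≤ f) {x y : V} (hx : x ∈ B i)
    (hy : y ∈ B i) : gdistW H wt x y ≤ ε := by
  rcases eq_or_ne x y with rfl | hxy
  · exact (gdistW_self_nonpos (fun _ _ => hL.wt_nonneg) x).trans hL.eps_pos.le
  · have hadj : H.Adj x y :=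
      (hL.adj_iff x y).2 <| .inr <| .inr <| .inr <| .inr <| .inl ⟨i, hi, hif, hx, hy, hxy⟩
    exact (gdistW_le_of_adj (fun _ _ => hL.wt_nonneg) hadj).trans
      (hL.wt_B i hi hif x hx y hy hxy).le

lemma dist_le_one_of_mem_cell {i : ℕ} (hi : 1 ≤ i) (hif : i ≤ f) {x v : V} (hx : x ∈ B i)
    (hv : v ∈ cell b B i) : gdistW H wt x v ≤ 1 := by
  have hW : ∀ x y, H.Adj x y → 0 ≤ wt x y := fun _ _ => hL.wt_nonneg
  rcases hv with rfl | rfl | hv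
  · exact (gdistW_le_of_adj hW (hL.adj_of_mem_B hi hif hx).1.symm).trans
      (hL.wt_B_b i hi hif x hx).1.le
  · exact (gdistW_le_of_adj hW (hL.adj_of_mem_B hi hif hx).2).trans
      (hL.wt_B_b i hi hif x hx).2.le
  · exact (hL.dist_le_eps_of_mem_B hi hif hx hv).trans hL.eps_le_one

lemma dist_b_zero_b_f_le : gdistW H wt (b 0) (b f) ≤ 1 + ε :=
  (gdistW_le_of_adj (fun _ _ => hL.wt_nonneg) ((hL.adj_iff _ _).2 (.inl rfl))).trans
    hL.wt_b_zero_b_f.le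

lemma blockPotential_of_mem_B (β γ : ℕ → ℝ) {i : ℕ} (hi : 1 ≤ i) (hif : i ≤ f) {x : V}
    (hx : x ∈ B i) : blockPotential f b B β γ x = β i := by
  have h : ∃ i, 1 ≤ i ∧ i ≤ f ∧ x ∈ B i := ⟨i, hi, hif, hx⟩
  obtain ⟨hi', hif', hx'⟩ := h.choose_spec
  rw [blockPotential, dif_pos h, hL.eq_of_mem_B hi' hif' hi hif hx' hx]

lemma blockPotential_b (β γ : ℕ → ℝ) {j : ℕ} (hj : j ≤ f) :
    blockPotential f b B β γ (b j) = γ j := by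
  have h : ∃ k ≤ f, b j = b k := ⟨j, hj, rfl⟩
  obtain ⟨hk, hjk⟩ := h.choose_spec
  rw [blockPotential, dif_neg (fun ⟨i, hi, hif, hb⟩ => hL.b_notMem_B i hi hif j hj hb), dif_pos h,
    ← hL.b_inj j hj _ hk hjk]

lemma abs_blockPotential_sub_le_dist {β γ : ℕ → ℝ} (hβγ : BlockLipschitz f ε β γ) (x y : V) :
    |blockPotential f b B β γ x - blockPotential f b B β γ y| ≤ gdistW H wt x y := by
  have hf3 := hL.three_le
  obtain ⟨hB, hspine, h01, hf, h0f⟩ := hβγ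
  refine abs_sub_le_gdistW (fun x y h => hL.forall_adj
    (P := fun x y => |blockPotential f b B β γ x - blockPotential f b B β γ y| ≤ wt x y)
    (fun x y h => by rwa [abs_sub_comm, hL.wt_symm]) ?_ ?_ ?_ (fun j hj hjf => ?_)
    (fun i hi hif x hx y hy hxy => ?_) (fun i hi hif x hx => ?_) h) (hL.reachable x y)
  · rwa [hL.blockPotential_b β γ (Nat.zero_le f), hL.blockPotential_b β γ le_rfl,
      hL.wt_b_zero_b_f]
  · rwa [hL.blockPotential_b β γ (Nat.zero_le f), hL.blockPotential_b β γ (by omega),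
      hL.wt_b_zero_b_one]
  · rwa [hL.blockPotential_b β γ (Nat.sub_le f 1), hL.blockPotential_b β γ le_rfl,
      hL.wt_b_pred_b_f]
  · rw [hL.blockPotential_b β γ (by omega), hL.blockPotential_b β γ (by omega),
      hL.wt_spine j hj hjf]
    exact hspine j hj hjf
  · rw [hL.blockPotential_of_mem_B β γ hi hif hx, hL.blockPotential_of_mem_B β γ hi hif hy,
      sub_self, abs_zero, hL.wt_B i hi hif x hx y hy hxy]
    exact hL.eps_pos.le
  · rw [hL.blockPotential_of_mem_B β γ hi hif hx, hL.blockPotential_b β γ (by omega),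
      hL.blockPotential_b β γ hif, (hL.wt_B_b i hi hif x hx).1, (hL.wt_B_b i hi hif x hx).2]
    exact hB i hi hif

lemma le_dist_of_mem_B {i : ℕ} (hi : 1 ≤ i) (hif : i ≤ f) {x y : V} (hx : x ∈ B i)
    (hy : y ∉ B i) : 1 ≤ gdistW H wt x y ∧ (y ∉ cell b B i → 1 + ε ≤ gdistW H wt x y) := by
  have hε := hL.eps_pos
  have hε1 := hL.eps_le_one
  set β : ℕ → ℝ := fun k => if k = i then 1 + ε else 0
  set γ : ℕ → ℝ := fun j => if j = i - 1 ∨ j = i then ε else 0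
  have hβγ : BlockLipschitz f ε β γ := by
    refine ⟨fun k _ _ => ?_, fun j _ _ => ?_, ?_, ?_, ?_⟩ <;> simp only [β, γ, abs_le] <;>
      split_ifs <;> first | contradiction | omega | (constructor <;> linarith) |
        (refine ⟨⟨?_, ?_⟩, ?_, ?_⟩ <;> linarith)
  have key := hL.abs_blockPotential_sub_le_dist hβγ x y
  rw [hL.blockPotential_of_mem_B β γ hi hif hx] at key
  rcases hL.cover y with ⟨j, hj, rfl⟩ | ⟨m, hm, hmf, hym⟩
  · rw [hL.blockPotential_b β γ hj] at key
    rw [hL.b_mem_cell_iff hi hif hj]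
    simp only [β, γ, if_true] at key
    split_ifs at key with hji
    · rw [show 1 + ε - ε = 1 by ring, abs_one] at key
      exact ⟨key, fun h => absurd hji h⟩
    · rw [sub_zero, abs_of_pos (by linarith)] at key
      exact ⟨by linarith, fun _ => key⟩
  · have hmi : m ≠ i := by rintro rfl; exact hy hym
    rw [hL.blockPotential_of_mem_B β γ hm hmf hym] at key
    simp only [β, hmi, if_true, if_false, sub_zero] at key
    rw [abs_of_pos (by linarith)] at key
    exact ⟨by linarith, fun _ => key⟩

lemma le_dist_b_zero_b_f : 1 + ε ≤ gdistW H wt (b 0) (b f) ∧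
    ∀ c, c ≠ b 0 → c ≠ b f → 1 ≤ gdistW H wt (b 0) c ∧ 1 ≤ gdistW H wt (b f) c := by
  have hε := hL.eps_pos
  have hε1 := hL.eps_le_one
  have hf3 := hL.three_le
  let γ : ℝ → ℕ → ℝ := fun s j => if j = 0 then 0 else if j = f then 1 + ε else s
  have key : ∀ s, ε ≤ s → s ≤ 1 → ∀ x y, |blockPotential f b B (fun _ => s) (γ s) x -
      blockPotential f b B (fun _ => s) (γ s) y| ≤ gdistW H wt x y := by
    intro s hs hs1
    refine hL.abs_blockPotential_sub_le_dist ?_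
    refine ⟨fun k _ _ => ?_, fun j _ _ => ?_, ?_, ?_, ?_⟩ <;> simp only [γ, abs_le] <;>
      split_ifs <;> first | contradiction | omega | (constructor <;> linarith) |
        (refine ⟨⟨?_, ?_⟩, ?_, ?_⟩ <;> linarith)
  have h0 : ∀ s, blockPotential f b B (fun _ => s) (γ s) (b 0) = 0 := fun s => by
    rw [hL.blockPotential_b _ _ (Nat.zero_le f)]; simp [γ]
  have hf : ∀ s, blockPotential f b B (fun _ => s) (γ s) (b f) = 1 + ε := fun s => by
    rw [hL.blockPotential_b _ _ le_rfl]; simp [γ]; omega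
  have hc : ∀ s c, c ≠ b 0 → c ≠ b f → blockPotential f b B (fun _ => s) (γ s) c = s := by
    intro s c hc0 hcf
    rcases hL.cover c with ⟨j, hj, rfl⟩ | ⟨i, hi, hif, hc⟩
    · rw [hL.blockPotential_b _ _ hj]
      simp only [γ]
      rw [if_neg (by rintro rfl; exact hc0 rfl), if_neg (by rintro rfl; exact hcf rfl)]
    · exact hL.blockPotential_of_mem_B _ _ hi hif hc
  refine ⟨?_, fun c hc0 hcf => ⟨?_, ?_⟩⟩
  · have h := key 1 hε1 le_rfl (b 0) (b f)
    rwa [h0, hf, zero_sub, abs_neg, abs_of_pos (by linarith)] at h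
  · simpa [h0, hc 1 c hc0 hcf] using key 1 hε1 le_rfl (b 0) c
  · simpa [hf, hc ε c hc0 hcf] using key ε le_rfl hε1 (b f) c

lemma abs_sub_le_dist_of_mem_cell {i : ℕ} (hi : 1 ≤ i) (hif : i ≤ f) {x y : V} (hx : x ∈ B i)
    (hy : y ∈ cell b B i) :
    |blockPotential f b B (fun i => 2 * i - 1) (fun j => 2 * j) x -
      blockPotential f b B (fun i => 2 * i - 1) (fun j => 2 * j) y| ≤ gdistW H wt x y := by
  rw [hL.blockPotential_of_mem_B _ _ hi hif hx]
  by_cases hyB : y ∈ B i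
  · rw [hL.blockPotential_of_mem_B _ _ hi hif hyB, sub_self, abs_zero]
    exact gdistW_nonneg (fun _ _ => hL.wt_nonneg) x y
  refine le_trans (le_of_eq ?_) (hL.le_dist_of_mem_B hi hif hx hyB).1
  rcases eq_b_of_mem_cell hy hyB with rfl | rfl
  · rw [hL.blockPotential_b _ _ (by omega), Nat.cast_sub hi, Nat.cast_one]
    rw [show (2 : ℝ) * i - 1 - 2 * (i - 1) = 1 by ring, abs_one]
  · rw [hL.blockPotential_b _ _ hif, show (2 : ℝ) * i - 1 - 2 * i = -1 by ring, abs_neg, abs_one]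

lemma exists_cell_of_adj {a c : V} (h : (H.deleteEdges {s(b 0, b f)}).Adj a c) :
    ∃ i, 1 ≤ i ∧ i ≤ f ∧ a ∈ cell b B i ∧ c ∈ cell b B i := by
  have hf3 := hL.three_le
  obtain ⟨hac, hne⟩ := SimpleGraph.deleteEdges_adj.1 h
  let P : V → V → Prop := fun a c => s(a, c) ≠ s(b 0, b f) →
    ∃ i, 1 ≤ i ∧ i ≤ f ∧ a ∈ cell b B i ∧ c ∈ cell b B i
  have hP : ∀ x y, P x y → P y x := fun x y h hyx => by
    obtain ⟨i, hi, hif, hx, hy⟩ := h (by rwa [Sym2.eq_swap])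
    exact ⟨i, hi, hif, hy, hx⟩
  refine hL.forall_adj hP (fun h => absurd rfl h) ?_ ?_ ?_ ?_ ?_ hac (by simpa using hne)
  · exact fun _ => ⟨1, le_rfl, by omega, b_pred_mem_cell 1, b_mem_cell 1⟩
  · exact fun _ => ⟨f, by omega, le_rfl, b_pred_mem_cell f, b_mem_cell f⟩
  · exact fun j hj hjf _ => ⟨j + 1, by omega, by omega,
      by simpa using b_pred_mem_cell (B := B) (j + 1), b_mem_cell (j + 1)⟩
  · exact fun i hi hif x hx y hy _ _ =>
      ⟨i, hi, hif, mem_cell_of_mem_B hx, mem_cell_of_mem_B hy⟩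
  · exact fun i hi hif x hx => ⟨fun _ => ⟨i, hi, hif, mem_cell_of_mem_B hx, b_pred_mem_cell i⟩,
      fun _ => ⟨i, hi, hif, mem_cell_of_mem_B hx, b_mem_cell i⟩⟩

variable {G : SimpleGraph V} {C : V → V → Set V}
  (hA : IsNearestAugmentation (H.deleteEdges {s(b 0, b f)}) (gdistW H wt) (2 * f - 1) C G)
include hA

lemma reachable_deleteEdges : (G.deleteEdges (spineEdges G b f)).Reachable (b 0) (b f) := by
  have hadj : ∀ u x, x ∉ spine b f → H.Adj u x → (G.deleteEdges (spineEdges G b f)).Adj u x := by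
    intro u x hx h
    refine SimpleGraph.deleteEdges_adj.2 ⟨(hA.adj_iff u x).2 (.inl ?_),
      fun hF => hx (hF.2 x (Sym2.mem_mk_right u x))⟩
    refine SimpleGraph.deleteEdges_adj.2 ⟨h, fun h0f => hx ?_⟩
    rcases Sym2.mem_iff.1 (Set.mem_singleton_iff.1 h0f ▸ Sym2.mem_mk_right u x) with h | h
    exacts [⟨0, Nat.zero_le f, h⟩, ⟨f, le_rfl, h⟩]
  refine reachable_b_of_chain
    (fun i hi hif => Set.nonempty_of_ncard_ne_zero (by rw [hL.ncard_B i hi hif]; omega))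
    (fun i hi hif x hx => ?_) f le_rfl
  have hxs := hL.notMem_spine_of_mem_B hi hif hx
  exact ⟨hadj _ _ hxs (hL.adj_of_mem_B hi hif hx).1,
    (hadj _ _ hxs (hL.adj_of_mem_B hi hif hx).2.symm).symm⟩

variable [Finite V]

lemma dist_add_dist_le_two {a c z : V} (hac : (H.deleteEdges {s(b 0, b f)}).Adj a c) {i : ℕ}
    (hi : 1 ≤ i) (hif : i ≤ f) (ha : a ∈ cell b B i) (hc : c ∈ cell b B i) (haB : a ∉ B i)
    (hz : z ∈ C a c) (hzB : z ∉ B i) : gdistW H wt a z + gdistW H wt z c ≤ 2 := by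
  refine hA.add_le_of_le_ncard hac (S := B i \ {c}) (fun h => haB h.1) (fun h => h.2 rfl)
    (hL.ncard_B i hi hif ▸ Set.pred_ncard_le_ncard_sdiff_singleton (B i) c) (fun y hy => ?_) hz
    (fun h => hzB h.1)
  have h₁ := hL.dist_le_one_of_mem_cell hi hif hy.1 ha
  have h₂ := hL.dist_le_one_of_mem_cell hi hif hy.1 hc
  rw [hL.dist_comm] at h₁
  linarith

lemma mem_cell_of_mem_C_of_mem_B {a c z : V} (hac : (H.deleteEdges {s(b 0, b f)}).Adj a c)
    {i : ℕ} (hi : 1 ≤ i) (hif : i ≤ f) (ha : a ∈ B i) (hc : c ∈ B i) (hz : z ∈ C a c) :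
    z ∈ cell b B i := by
  have hε := hL.eps_pos
  have hε1 := hL.eps_le_one
  by_contra hzi
  have hzB : z ∉ B i := fun h => hzi (mem_cell_of_mem_B h)
  have haz := (hL.le_dist_of_mem_B hi hif ha hzB).2 hzi
  have hcz := (hL.le_dist_of_mem_B hi hif hc hzB).2 hzi
  rw [hL.dist_comm] at hcz
  have hbB := hL.b_notMem_B i hi hif (i - 1) (by omega)
  have hS : 2 * f - 1 ≤ (insert (b (i - 1)) (B i \ {a, c})).ncard := by
    rw [Set.ncard_insert_of_notMem (fun h => hbB h.1)]
    have := Set.le_ncard_sdiff {a, c} (B i)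
    rw [hL.ncard_B i hi hif, Set.ncard_pair hac.ne] at this
    omega
  have := hA.add_le_of_le_ncard hac (D := 2) (fun h => ?_) (fun h => ?_) hS (fun y hy => ?_) hz
    (fun h => ?_)
  · linarith
  · rcases h with h | h
    exacts [hL.ne_b_of_mem_B hi hif (by omega) ha h, h.2 (.inl rfl)]
  · rcases h with h | h
    exacts [hL.ne_b_of_mem_B hi hif (by omega) hc h, h.2 (.inr rfl)]
  · rcases hy with rfl | hy
    · have h₁ := hL.dist_le_one_of_mem_cell hi hif ha (b_pred_mem_cell i)
      have h₂ := hL.dist_le_one_of_mem_cell hi hif hc (b_pred_mem_cell i)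
      rw [hL.dist_comm] at h₂
      linarith
    · have h₁ := hL.dist_le_eps_of_mem_B hi hif ha hy.1
      have h₂ := hL.dist_le_eps_of_mem_B hi hif hy.1 hc
      linarith
  · rcases h with rfl | h
    exacts [hzi (b_pred_mem_cell i), hzB h.1]

lemma mem_cell_of_mem_C_of_notMem_B {a c z : V}
    (hac : (H.deleteEdges {s(b 0, b f)}).Adj a c) {i : ℕ} (hi : 1 ≤ i) (hif : i ≤ f)
    (ha : a ∈ B i) (hc : c ∈ cell b B i) (hcB : c ∉ B i) (hz : z ∈ C a c) : z ∈ cell b B i := by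
  have hε := hL.eps_pos
  by_contra hzi
  have hzB : z ∉ B i := fun h => hzi (mem_cell_of_mem_B h)
  have haz := (hL.le_dist_of_mem_B hi hif ha hzB).2 hzi
  have hzc : ε ≤ gdistW H wt z c := le_gdistW_of_ne hε.le (fun _ _ => hL.eps_le_wt)
    (hL.reachable z c) (fun h => hzi (h ▸ hc))
  have := hA.add_le_of_le_ncard hac (S := B i \ {a}) (D := 1 + ε) (fun h => h.2 rfl)
    (fun h => hcB h.1) (hL.ncard_B i hi hif ▸ Set.pred_ncard_le_ncard_sdiff_singleton (B i) a)
    (fun y hy => ?_) hz (fun h => hzB h.1)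
  · linarith
  · have h₁ := hL.dist_le_eps_of_mem_B hi hif ha hy.1
    have h₂ := hL.dist_le_one_of_mem_cell hi hif hy.1 hc
    linarith

lemma mem_cell_of_mem_C {a c z : V} (hac : (H.deleteEdges {s(b 0, b f)}).Adj a c) {i : ℕ}
    (hi : 1 ≤ i) (hif : i ≤ f) (ha : a ∈ B i) (hc : c ∈ cell b B i) (hz : z ∈ C a c) :
    z ∈ cell b B i := by
  by_cases hcB : c ∈ B i
  · exact hL.mem_cell_of_mem_C_of_mem_B hA hac hi hif ha hcB hz
  · exact hL.mem_cell_of_mem_C_of_notMem_B hA hac hi hif ha hc hcB hz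

lemma mem_C_cases {a c z : V} (hac : (H.deleteEdges {s(b 0, b f)}).Adj a c) (hz : z ∈ C a c) :
    (a ∈ spine b f ∧ z ∈ spine b f) ∨
      ∃ i, 1 ≤ i ∧ i ≤ f ∧ a ∈ cell b B i ∧ z ∈ cell b B i := by
  have hε := hL.eps_pos
  obtain ⟨i, hi, hif, ha, hc⟩ := hL.exists_cell_of_adj hac
  by_cases haB : a ∈ B i
  · exact .inr ⟨i, hi, hif, ha, hL.mem_cell_of_mem_C hA hac hi hif haB hc hz⟩
  by_cases hcB : c ∈ B i
  · exact .inr ⟨i, hi, hif, ha,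
      hL.mem_cell_of_mem_C hA hac.symm hi hif hcB ha (hA.symm a c ▸ hz)⟩
  by_cases hzB : z ∈ B i
  · exact .inr ⟨i, hi, hif, ha, mem_cell_of_mem_B hzB⟩
  have hsum := hL.dist_add_dist_le_two hA hac hi hif ha hc haB hz hzB
  rw [hL.dist_comm a z] at hsum
  rcases hL.cover z with ⟨k, hk, rfl⟩ | ⟨m, hm, hmf, hzm⟩
  · refine .inl ⟨?_, k, hk, rfl⟩
    rcases eq_b_of_mem_cell ha haB with rfl | rfl
    exacts [⟨i - 1, by omega, rfl⟩, ⟨i, hif, rfl⟩]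
  · exfalso
    have hmi : m ≠ i := by rintro rfl; exact hzB hzm
    have hfar : b (i - 1) ∉ cell b B m ∨ b i ∉ cell b B m := by
      rw [hL.b_mem_cell_iff hm hmf (by omega), hL.b_mem_cell_iff hm hmf hif]
      omega
    have h₁ := hL.le_dist_of_mem_B hm hmf hzm (hL.b_notMem_B m hm hmf (i - 1) (by omega))
    have h₂ := hL.le_dist_of_mem_B hm hmf hzm (hL.b_notMem_B m hm hmf i hif)
    have hlow : 2 + ε ≤ gdistW H wt z (b (i - 1)) + gdistW H wt z (b i) := by
      rcases hfar with h | h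
      · linarith [h₁.2 h, h₂.1]
      · linarith [h₁.1, h₂.2 h]
    rcases eq_b_of_mem_cell ha haB with rfl | rfl <;>
      rcases eq_b_of_mem_cell hc hcB with rfl | rfl <;>
      first | exact hac.ne rfl | linarith

lemma spine_or_exists_cell_of_adj {x y : V} (h : G.Adj x y) :
    (x ∈ spine b f ∧ y ∈ spine b f) ∨
      ∃ i, 1 ≤ i ∧ i ≤ f ∧ x ∈ cell b B i ∧ y ∈ cell b B i := by
  rcases hA.adj_cases h with h | ⟨c, hxc, hy⟩ | ⟨c, hyc, hx⟩
  · exact .inr (hL.exists_cell_of_adj h)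
  · exact hL.mem_C_cases hA hxc hy
  · rcases hL.mem_C_cases hA hyc hx with ⟨hy, hx⟩ | ⟨i, hi, hif, hy, hx⟩
    exacts [.inl ⟨hx, hy⟩, .inr ⟨i, hi, hif, hx, hy⟩]

lemma not_adj_b_zero_b_f : ¬ G.Adj (b 0) (b f) := by
  have hε := hL.eps_pos
  have hf3 := hL.three_le
  obtain ⟨h0f, hend⟩ := hL.le_dist_b_zero_b_f
  have key : ∀ x y c, s(x, y) = s(b 0, b f) → (H.deleteEdges {s(b 0, b f)}).Adj x c →
      y ∈ C x c → False := by
    intro x y c hxy hxc hy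
    obtain ⟨i, hi, hif, hx, hc⟩ := hL.exists_cell_of_adj hxc
    have hcx : c ≠ x := hxc.ne.symm
    have hcy : c ≠ y := by
      rintro rfl
      exact (SimpleGraph.deleteEdges_adj.1 hxc).2 hxy
    rcases Sym2.eq_iff.1 hxy with ⟨rfl, rfl⟩ | ⟨rfl, rfl⟩
    · have := hL.dist_add_dist_le_two hA hxc hi hif hx hc (hL.b_notMem_B i hi hif 0 (by omega))
        hy (hL.b_notMem_B i hi hif f le_rfl)
      linarith [(hend c hcx hcy).2]
    · have := hL.dist_add_dist_le_two hA hxc hi hif hx hc (hL.b_notMem_B i hi hif f le_rfl)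
        hy (hL.b_notMem_B i hi hif 0 (by omega))
      linarith [(hend c hcy hcx).1, hL.dist_comm (b f) (b 0)]
  intro h
  rcases hA.adj_cases h with h | ⟨c, hc, hy⟩ | ⟨c, hc, hx⟩
  · exact (SimpleGraph.deleteEdges_adj.1 h).2 rfl
  · exact key _ _ c rfl hc hy
  · exact key _ _ c Sym2.eq_swap hc hx

lemma abs_sub_le_dist_of_adj_deleteEdges {x y : V}
    (h : (G.deleteEdges (spineEdges G b f)).Adj x y) :
    |blockPotential f b B (fun i => 2 * i - 1) (fun j => 2 * j) x -
      blockPotential f b B (fun i => 2 * i - 1) (fun j => 2 * j) y| ≤ gdistW H wt x y := by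
  obtain ⟨hxy, hF⟩ := SimpleGraph.deleteEdges_adj.1 h
  have mem_spine : ∀ {i v}, 1 ≤ i → i ≤ f → v ∈ cell b B i → v ∉ B i → v ∈ spine b f := by
    intro i v hi hif hv hvB
    rcases eq_b_of_mem_cell hv hvB with rfl | rfl
    exacts [⟨i - 1, by omega, rfl⟩, ⟨i, hif, rfl⟩]
  rcases hL.spine_or_exists_cell_of_adj hA hxy with ⟨hx, hy⟩ | ⟨i, hi, hif, hx, hy⟩
  · exact absurd ⟨hxy, fun v hv => by rcases Sym2.mem_iff.1 hv with rfl | rfl <;> assumption⟩ hF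
  by_cases hxB : x ∈ B i
  · exact hL.abs_sub_le_dist_of_mem_cell hi hif hxB hy
  by_cases hyB : y ∈ B i
  · rw [abs_sub_comm, hL.dist_comm]
    exact hL.abs_sub_le_dist_of_mem_cell hi hif hyB hx
  refine absurd ⟨hxy, fun v hv => ?_⟩ hF
  rcases Sym2.mem_iff.1 hv with rfl | rfl
  exacts [mem_spine hi hif hx hxB, mem_spine hi hif hy hyB]

lemma two_mul_le_dist_deleteEdges :
    2 * (f : ℝ) ≤ gdistW (G.deleteEdges (spineEdges G b f)) (gdistW H wt) (b 0) (b f) := by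
  have key := abs_sub_le_gdistW (fun _ _ => hL.abs_sub_le_dist_of_adj_deleteEdges hA)
    (hL.reachable_deleteEdges hA)
  rwa [hL.blockPotential_b _ _ (Nat.zero_le f), hL.blockPotential_b _ _ le_rfl, Nat.cast_zero,
    mul_zero, zero_sub, abs_neg, abs_of_nonneg (by positivity)] at key

lemma dist_top_deleteEdges_le :
    gdistW ((⊤ : SimpleGraph V).deleteEdges (spineEdges G b f)) (gdistW H wt) (b 0) (b f) ≤
      1 + ε := by
  have hf3 := hL.three_le
  have hadj : ((⊤ : SimpleGraph V).deleteEdges (spineEdges G b f)).Adj (b 0) (b f) :=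
    SimpleGraph.deleteEdges_adj.2 ⟨(hL.b_inj 0 (by omega) f le_rfl).mt (by omega),
      fun h => hL.not_adj_b_zero_b_f hA h.1⟩
  exact (gdistW_le_of_adj (fun x y _ => gdistW_nonneg (fun _ _ => hL.wt_nonneg) x y) hadj).trans
    hL.dist_b_zero_b_f_le


end IsLowerBoundGraph
theorem stmt18_general
    {V : Type*} [Fintype V] (f : ℕ) (hf : 3 ≤ f) (ε : ℝ)
    (hε0 : 0 < ε) (hε1 : ε * ((f : ℝ) - 2) < 1)
    -- the points b_0, ..., b_f (forming B_0) and the sets B_1, ..., B_f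
    (b : ℕ → V) (B : ℕ → Set V)
    (hbinj : ∀ i ≤ f, ∀ j ≤ f, b i = b j → i = j)
    (hBcard : ∀ i, 1 ≤ i → i ≤ f → (B i).ncard = 2 * f)
    (hBdisj : ∀ i j, 1 ≤ i → i ≤ f → 1 ≤ j → j ≤ f → i ≠ j → B i ∩ B j = ∅)
    (hbB : ∀ i, 1 ≤ i → i ≤ f → ∀ j ≤ f, b j ∉ B i)
    (hcover : ∀ v : V, (∃ j ≤ f, v = b j) ∨ ∃ i, 1 ≤ i ∧ i ≤ f ∧ v ∈ B i)
    -- the edges of the graph H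
    (H : SimpleGraph V)
    (hH : ∀ x y : V, H.Adj x y ↔
      s(x, y) = s(b 0, b f) ∨
      s(x, y) = s(b 0, b 1) ∨
      s(x, y) = s(b (f - 1), b f) ∨
      (∃ j, 1 ≤ j ∧ j ≤ f - 2 ∧ s(x, y) = s(b j, b (j + 1))) ∨
      (∃ i, 1 ≤ i ∧ i ≤ f ∧ x ∈ B i ∧ y ∈ B i ∧ x ≠ y) ∨
      (∃ i, 1 ≤ i ∧ i ≤ f ∧
        ((x ∈ B i ∧ (y = b (i - 1) ∨ y = b i)) ∨ (y ∈ B i ∧ (x = b (i - 1) ∨ x = b i)))))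
    -- the edge weights of H
    (wt : V → V → ℝ) (hwtsymm : ∀ x y, wt x y = wt y x)
    (hw1 : wt (b 0) (b f) = 1 + ε)
    (hw2 : wt (b 0) (b 1) = 1) (hw3 : wt (b (f - 1)) (b f) = 1)
    (hw4 : ∀ j, 1 ≤ j → j ≤ f - 2 → wt (b j) (b (j + 1)) = ε)
    (hw5 : ∀ i, 1 ≤ i → i ≤ f → ∀ x ∈ B i, ∀ y ∈ B i, x ≠ y → wt x y = ε)
    (hw6 : ∀ i, 1 ≤ i → i ≤ f → ∀ x ∈ B i, wt x (b (i - 1)) = 1 ∧ wt x (b i) = 1)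
    -- the augmented graph G, built from G' = H minus {b_0, b_f} using the
    -- shortest-path metric dH of H
    (G : SimpleGraph V) (C : V → V → Set V)
    (hCsymm : ∀ a c, C a c = C c a)
    (hCcard : ∀ a c, (H.deleteEdges {s(b 0, b f)}).Adj a c → (C a c).ncard = 2 * f - 1)
    (hCmin : ∀ a c, (H.deleteEdges {s(b 0, b f)}).Adj a c →
      ∀ z ∈ C a c, ∀ x : V, x ≠ a → x ≠ c → x ∉ C a c →
        gdistW H wt a z + gdistW H wt z c ≤ gdistW H wt a x + gdistW H wt x c)
    (hG : ∀ x y : V, G.Adj x y ↔ (H.deleteEdges {s(b 0, b f)}).Adj x y ∨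
      ∃ a c : V, (H.deleteEdges {s(b 0, b f)}).Adj a c ∧
        ((x = a ∧ y ∈ C a c) ∨ (x = c ∧ y ∈ C a c) ∨
         (y = a ∧ x ∈ C a c) ∨ (y = c ∧ x ∈ C a c))) :
    -- there is a fault set F of maximum degree at most f (namely all edges of G
    -- with both endpoints in B_0 = {b_0, ..., b_f}) witnessing stretch at least f
    ∃ F : Set (Sym2 V), F ⊆ G.edgeSet ∧ maxDegLe F f ∧
      (∀ e : Sym2 V, e ∈ F ↔ e ∈ G.edgeSet ∧ ∀ v ∈ e, ∃ j ≤ f, v = b j) ∧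
      (f : ℝ) * gdistW ((⊤ : SimpleGraph V).deleteEdges F) (fun x y => gdistW H wt x y)
          (b 0) (b f) ≤
        gdistW (G.deleteEdges F) (fun x y => gdistW H wt x y) (b 0) (b f) := by
  have hf' : (3 : ℝ) ≤ f := by exact_mod_cast hf
  have hε : ε ≤ 1 := by nlinarith
  have hL : IsLowerBoundGraph f ε b B H wt := ⟨hf, hε0, hε, hbinj, hBcard, hBdisj, hbB, hcover,
    hH, hwtsymm, hw1, hw2, hw3, hw4, hw5, hw6⟩
  have hA : IsNearestAugmentation (H.deleteEdges {s(b 0, b f)}) (gdistW H wt) (2 * f - 1) C G :=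
    ⟨hCsymm, hCcard, hCmin, hG⟩
  refine ⟨IsLowerBoundGraph.spineEdges G b f, fun e he => he.1,
    IsLowerBoundGraph.maxDegLe_spineEdges G b f, fun e => Iff.rfl, ?_⟩
  calc (f : ℝ) * gdistW _ (fun x y => gdistW H wt x y) (b 0) (b f) ≤ f * (1 + ε) :=
        mul_le_mul_of_nonneg_left (hL.dist_top_deleteEdges_le hA) (by positivity)
    _ ≤ 2 * f := by nlinarith
    _ ≤ _ := hL.two_mul_le_dist_deleteEdges hA

theorem stmt18
    {V : Type*} [Fintype V] (f : ℕ) (hf : 3 ≤ f) (ε : ℝ)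
    (hε0 : 0 < ε) (hε1 : ε * ((f : ℝ) - 2) < 1)
    -- the points b_0, ..., b_f (forming B_0) and the sets B_1, ..., B_f
    (b : ℕ → V) (B : ℕ → Set V)
    (hbinj : ∀ i ≤ f, ∀ j ≤ f, b i = b j → i = j)
    (hBcard : ∀ i, 1 ≤ i → i ≤ f → (B i).ncard = 2 * f)
    (hBdisj : ∀ i j, 1 ≤ i → i ≤ f → 1 ≤ j → j ≤ f → i ≠ j → B i ∩ B j = ∅)
    (hbB : ∀ i, 1 ≤ i → i ≤ f → ∀ j ≤ f, b j ∉ B i)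
    (hcover : ∀ v : V, (∃ j ≤ f, v = b j) ∨ ∃ i, 1 ≤ i ∧ i ≤ f ∧ v ∈ B i)
    -- the edges of the graph H
    (H : SimpleGraph V)
    (hH : ∀ x y : V, H.Adj x y ↔
      s(x, y) = s(b 0, b f) ∨
      s(x, y) = s(b 0, b 1) ∨
      s(x, y) = s(b (f - 1), b f) ∨
      (∃ j, 1 ≤ j ∧ j ≤ f - 2 ∧ s(x, y) = s(b j, b (j + 1))) ∨
      (∃ i, 1 ≤ i ∧ i ≤ f ∧ x ∈ B i ∧ y ∈ B i ∧ x ≠ y) ∨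
      (∃ i, 1 ≤ i ∧ i ≤ f ∧
        ((x ∈ B i ∧ (y = b (i - 1) ∨ y = b i)) ∨ (y ∈ B i ∧ (x = b (i - 1) ∨ x = b i)))))
    -- the edge weights of H
    (wt : V → V → ℝ) (hwtsymm : ∀ x y, wt x y = wt y x)
    (hw1 : wt (b 0) (b f) = 1 + ε)
    (hw2 : wt (b 0) (b 1) = 1) (hw3 : wt (b (f - 1)) (b f) = 1)
    (hw4 : ∀ j, 1 ≤ j → j ≤ f - 2 → wt (b j) (b (j + 1)) = ε)
    (hw5 : ∀ i, 1 ≤ i → i ≤ f → ∀ x ∈ B i, ∀ y ∈ B i, x ≠ y → wt x y = ε)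
    (hw6 : ∀ i, 1 ≤ i → i ≤ f → ∀ x ∈ B i, wt x (b (i - 1)) = 1 ∧ wt x (b i) = 1)
    -- the augmented graph G, built from G' = H minus {b_0, b_f} using the
    -- shortest-path metric dH of H
    (G : SimpleGraph V) (C : V → V → Set V)
    (hCsub : ∀ a c, (H.deleteEdges {s(b 0, b f)}).Adj a c → C a c ⊆ ({a, c} : Set V)ᶜ)
    (hCsymm : ∀ a c, C a c = C c a)
    (hCcard : ∀ a c, (H.deleteEdges {s(b 0, b f)}).Adj a c → (C a c).ncard = 2 * f - 1)
    (hCmin : ∀ a c, (H.deleteEdges {s(b 0, b f)}).Adj a c →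
      ∀ z ∈ C a c, ∀ x : V, x ≠ a → x ≠ c → x ∉ C a c →
        gdistW H wt a z + gdistW H wt z c ≤ gdistW H wt a x + gdistW H wt x c)
    (hG : ∀ x y : V, G.Adj x y ↔ (H.deleteEdges {s(b 0, b f)}).Adj x y ∨
      ∃ a c : V, (H.deleteEdges {s(b 0, b f)}).Adj a c ∧
        ((x = a ∧ y ∈ C a c) ∨ (x = c ∧ y ∈ C a c) ∨
         (y = a ∧ x ∈ C a c) ∨ (y = c ∧ x ∈ C a c))) :
    -- there is a fault set F of maximum degree at most f (namely all edges of G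
    -- with both endpoints in B_0 = {b_0, ..., b_f}) witnessing stretch at least f
    ∃ F : Set (Sym2 V), F ⊆ G.edgeSet ∧ maxDegLe F f ∧
      (∀ e : Sym2 V, e ∈ F ↔ e ∈ G.edgeSet ∧ ∀ v ∈ e, ∃ j ≤ f, v = b j) ∧
      (f : ℝ) * gdistW ((⊤ : SimpleGraph V).deleteEdges F) (fun x y => gdistW H wt x y)
          (b 0) (b f) ≤
        gdistW (G.deleteEdges F) (fun x y => gdistW H wt x y) (b 0) (b f) :=
  stmt18_general f hf ε hε0 hε1 b B hbinj hBcard hBdisj hbB hcover H hH wt hwtsymm hw1 hw2 hw3 hw4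
    hw5 hw6 G C hCsymm hCcard hCmin hG
end

section
/- Suppose the shortest path P' in the t-spanner G' between points p and q has at least 2f+2 vertices. Then, for any edge set F of G of maximum degree at most f, the shortest-path distance between p and q in G \ F is at most (8f+2)·|P'|, where |P'| is the length of P'. -/
open Real

lemma wlen_nil {V : Type*} [PseudoMetricSpace V] {G : SimpleGraph V} {u : V} :
    wlen (SimpleGraph.Walk.nil : G.Walk u u) = 0 := by simp [wlen]

lemma wlen_cons {V : Type*} [PseudoMetricSpace V] {G : SimpleGraph V} {u v x : V}
    (h : G.Adj u v) (w : G.Walk v x) : wlen (w.cons h) = dist u v + wlen w := by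
  simp [wlen, SimpleGraph.Walk.darts_cons]

lemma wlen_nonneg {V : Type*} [PseudoMetricSpace V] {G : SimpleGraph V} {u v : V}
    (w : G.Walk u v) : 0 ≤ wlen w := by
  induction w with
  | nil => simp [wlen_nil]
  | cons h w ih => rw [wlen_cons]; positivity

lemma wlen_append {V : Type*} [PseudoMetricSpace V] {G : SimpleGraph V} {u v x : V}
    (w1 : G.Walk u v) (w2 : G.Walk v x) : wlen (w1.append w2) = wlen w1 + wlen w2 := by
  simp [wlen, SimpleGraph.Walk.darts_append]

lemma wlen_eq_sum {V : Type*} [PseudoMetricSpace V] {G : SimpleGraph V} {u v : V}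
    (w : G.Walk u v) :
    wlen w = ∑ i ∈ Finset.range w.length, dist (w.getVert i) (w.getVert (i + 1)) := by
  induction w with
  | nil => simp [wlen_nil]
  | cons h w ih =>
    rw [wlen_cons, ih, SimpleGraph.Walk.length_cons, Finset.sum_range_succ']
    have h1 : ∀ x : ℕ, ((w.cons h).getVert (1 + (x + 1))) = w.getVert (x + 1) := by
      intro x
      rw [show 1 + (x + 1) = (x + 1) + 1 by omega]
      simp [SimpleGraph.Walk.getVert_cons_succ]
    simp only [h1, SimpleGraph.Walk.getVert_cons_succ, SimpleGraph.Walk.getVert_zero]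
    rw [add_comm]

lemma getVert_injOn {V : Type*} {G : SimpleGraph V} {u v : V} (w : G.Walk u v)
    (hw : w.IsPath) : ∀ i ≤ w.length, ∀ j ≤ w.length, w.getVert i = w.getVert j → i = j := by
  induction w with
  | nil => intro i hi j hj _; simp only [SimpleGraph.Walk.length_nil, Nat.le_zero] at hi hj; omega
  | cons h w ih =>
    rw [SimpleGraph.Walk.cons_isPath_iff] at hw
    intro i hi j hj hij
    match i, j with
    | 0, 0 => rfl
    | 0, j + 1 =>
      exfalso; apply hw.2
      rw [SimpleGraph.Walk.mem_support_iff_exists_getVert]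
      exact ⟨j, by simpa using hij.symm, by simpa using hj⟩
    | i + 1, 0 =>
      exfalso; apply hw.2
      rw [SimpleGraph.Walk.mem_support_iff_exists_getVert]
      exact ⟨i, by simpa using hij, by simpa using hi⟩
    | i + 1, j + 1 =>
      have := ih hw.1 i (by simpa using hi) j (by simpa using hj) (by simpa using hij)
      omega

theorem stmt19 {V : Type*} [Fintype V] [MetricSpace V] (n f : ℕ) (t : ℝ)
    (hn : Fintype.card V = n) (hf1 : 1 ≤ f) (hf2 : 2 * f ≤ n - 1) (ht : 1 ≤ t)
    (G' G : SimpleGraph V) (C : V → V → Set V)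
    -- G' is a t-spanner for S
    (hspan : ∀ p q : V, gdist G' p q ≤ t * dist p q)
    (hCsub : ∀ a b, G'.Adj a b → C a b ⊆ ({a, b} : Set V)ᶜ)
    (hCsymm : ∀ a b, C a b = C b a)
    (hCcard : ∀ a b, G'.Adj a b → (C a b).ncard = 2 * f - 1)
    (hCmin : ∀ a b, G'.Adj a b → ∀ c ∈ C a b, ∀ x : V, x ≠ a → x ≠ b → x ∉ C a b →
      dist a c + dist c b ≤ dist a x + dist x b)
    (hG : ∀ x y : V, G.Adj x y ↔ G'.Adj x y ∨ ∃ a b : V, G'.Adj a b ∧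
      ((x = a ∧ y ∈ C a b) ∨ (x = b ∧ y ∈ C a b) ∨
       (y = a ∧ x ∈ C a b) ∨ (y = b ∧ x ∈ C a b)))
    (F : Set (Sym2 V)) (hF : F ⊆ G.edgeSet) (hdeg : maxDegLe F f)
    (p q : V) (hpq : p ≠ q)
    -- P' is a shortest path between p and q in G' with at least 2f+2 vertices
    (P' : G'.Walk p q) (hP'path : P'.IsPath)
    (hP'short : wlen P' = gdist G' p q)
    (hP'len : 2 * f + 2 ≤ P'.support.length) :
    gdist (G.deleteEdges F) p q ≤ ((8 * f + 2 : ℕ) : ℝ) * wlen P' := by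
  classical
  set k := P'.length with hkdef
  have hk : 2 * f + 1 ≤ k := by
    have := P'.length_support
    omega
  set v : ℕ → V := fun i => P'.getVert i with hvdef
  set d : ℕ → ℝ := fun m => dist (v m) (v (m + 1)) with hddef
  have hd0 : ∀ m, 0 ≤ d m := fun m => dist_nonneg
  have hwlen : wlen P' = ∑ m ∈ Finset.range k, d m := wlen_eq_sum P'
  have hinj : ∀ i ≤ k, ∀ j ≤ k, v i = v j → i = j := getVert_injOn P' hP'path
  have hadj : ∀ i, i < k → G'.Adj (v i) (v (i + 1)) := fun i hi => P'.adj_getVert_succ hi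
  -- triangle inequality along the path
  have htri : ∀ i j, i ≤ j → dist (v i) (v j) ≤ ∑ m ∈ Finset.Ico i j, d m := by
    intro i j hij
    induction j, hij using Nat.le_induction with
    | base => simp
    | succ j hij ih =>
      calc dist (v i) (v (j + 1)) ≤ dist (v i) (v j) + dist (v j) (v (j + 1)) :=
            dist_triangle _ _ _
        _ ≤ (∑ m ∈ Finset.Ico i j, d m) + d j := by gcongr
        _ = ∑ m ∈ Finset.Ico i (j + 1), d m := (Finset.sum_Ico_succ_top hij d).symm
  have htri2 : ∀ i j, dist (v i) (v j) ≤ ∑ m ∈ Finset.Ico (min i j) (max i j), d m := by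
    intro i j
    rcases le_total i j with h | h
    · rw [min_eq_left h, max_eq_right h]; exact htri i j h
    · rw [min_eq_right h, max_eq_left h, dist_comm]; exact htri j i h
  set B : ℕ → Finset ℕ :=
    fun i => (Finset.range k).filter (fun m => i ≤ m + 2 * f ∧ m ≤ i + 2 * f) with hBdef
  -- the local detour lemma
  have step : ∀ i, i < k → ∃ w : (G.deleteEdges F).Walk (v i) (v (i + 1)),
      wlen w ≤ 2 * ∑ m ∈ B i, d m := by
    intro i hi
    have hab : G'.Adj (v i) (v (i + 1)) := hadj i hi
    have hiB : i ∈ B i := by simp [hBdef, hi]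
    have hdB : d i ≤ ∑ m ∈ B i, d m := Finset.single_le_sum (fun m _ => hd0 m) hiB
    have hBnn : 0 ≤ ∑ m ∈ B i, d m := Finset.sum_nonneg fun m _ => hd0 m
    by_cases hdir : s(v i, v (i + 1)) ∈ F
    · -- direct edge deleted; detour through some c
      set a := v i
      set b := v (i + 1)
      -- find a good c
      have hCfin : (C a b).Finite := Set.toFinite _
      have hDa : {e | e ∈ F ∧ a ∈ e}.Finite ∧ {e | e ∈ F ∧ a ∈ e}.ncard ≤ f :=
        Set.encard_le_coe_iff_finite_ncard_le.mp (hdeg a)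
      have hDb : {e | e ∈ F ∧ b ∈ e}.Finite ∧ {e | e ∈ F ∧ b ∈ e}.ncard ≤ f :=
        Set.encard_le_coe_iff_finite_ncard_le.mp (hdeg b)
      have habF : s(a, b) ∈ {e | e ∈ F ∧ a ∈ e} := ⟨hdir, Sym2.mem_mk_left a b⟩
      have habF' : s(a, b) ∈ {e | e ∈ F ∧ b ∈ e} := ⟨hdir, Sym2.mem_mk_right a b⟩
      have hDa' : ({e | e ∈ F ∧ a ∈ e} \ {s(a, b)}).ncard ≤ f - 1 := by
        have := Set.ncard_diff_singleton_add_one habF hDa.1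
        omega
      have hDb' : ({e | e ∈ F ∧ b ∈ e} \ {s(a, b)}).ncard ≤ f - 1 := by
        have := Set.ncard_diff_singleton_add_one habF' hDb.1
        omega
      have hCprop : ∀ c ∈ C a b, c ≠ a ∧ c ≠ b := by
        intro c hc
        have := hCsub a b hab hc
        simp only [Set.mem_compl_iff, Set.mem_insert_iff, Set.mem_singleton_iff, not_or] at this
        exact this
      have hBadA : {c ∈ C a b | s(a, c) ∈ F}.ncard ≤ f - 1 := by
        refine le_trans (Set.ncard_le_ncard_of_injOn (fun c => s(a, c)) ?_ ?_
          (hDa.1.subset Set.diff_subset)) hDa'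
        · rintro c ⟨hc, hcF⟩
          refine ⟨⟨hcF, Sym2.mem_mk_left a c⟩, ?_⟩
          simp only [Set.mem_singleton_iff, Sym2.eq_iff]
          rintro (⟨-, h⟩ | ⟨h1, h2⟩)
          · exact (hCprop c hc).2 h
          · exact (hCprop c hc).1 h2
        · rintro c ⟨hc, -⟩ c' ⟨hc', -⟩ h
          rw [Sym2.eq_iff] at h
          rcases h with ⟨-, h⟩ | ⟨h1, h2⟩
          · exact h
          · exact absurd h2 (hCprop c hc).1
      have hBadB : {c ∈ C a b | s(c, b) ∈ F}.ncard ≤ f - 1 := by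
        refine le_trans (Set.ncard_le_ncard_of_injOn (fun c => s(c, b)) ?_ ?_
          (hDb.1.subset Set.diff_subset)) hDb'
        · rintro c ⟨hc, hcF⟩
          refine ⟨⟨hcF, Sym2.mem_mk_right c b⟩, ?_⟩
          simp only [Set.mem_singleton_iff, Sym2.eq_iff]
          rintro (⟨h, -⟩ | ⟨h1, h2⟩)
          · exact (hCprop c hc).1 h
          · exact (hCprop c hc).2 h1
        · rintro c ⟨hc, -⟩ c' ⟨hc', -⟩ h
          rw [Sym2.eq_iff] at h
          rcases h with ⟨h, -⟩ | ⟨h1, h2⟩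
          · exact h
          · exact absurd h1 (hCprop c hc).2
      obtain ⟨c, hc, hcA, hcB⟩ : ∃ c ∈ C a b, s(a, c) ∉ F ∧ s(c, b) ∉ F := by
        by_contra hcon
        push_neg at hcon
        have hsub : C a b ⊆ {c ∈ C a b | s(a, c) ∈ F} ∪ {c ∈ C a b | s(c, b) ∈ F} := by
          intro c hc
          rcases imp_iff_not_or.mp (hcon c hc) with h | h
          · exact Or.inl ⟨hc, not_not.mp h⟩
          · exact Or.inr ⟨hc, h⟩
        have h1 := Set.ncard_le_ncard hsub (Set.toFinite _)
        have h2 := Set.ncard_union_le {c ∈ C a b | s(a, c) ∈ F} {c ∈ C a b | s(c, b) ∈ F}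
        have h3 := hCcard a b hab
        omega
      have hca : c ≠ a := (hCprop c hc).1
      have hcb : c ≠ b := (hCprop c hc).2
      -- find a witness x = v j outside C a b ∪ {a, b}
      set s0 := min i (k - (2 * f + 1)) with hs0def
      have hs0i : s0 ≤ i := min_le_left _ _
      have hs0k : s0 + (2 * f + 1) ≤ k := by omega
      have his0 : i ≤ s0 + 2 * f := by omega
      obtain ⟨j, hjW, hjC, hja, hjb⟩ : ∃ j, (s0 ≤ j ∧ j ≤ s0 + (2 * f + 1)) ∧
          v j ∉ C a b ∧ v j ≠ a ∧ v j ≠ b := by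
        by_contra hcon
        push_neg at hcon
        have hmap : ∀ j ∈ Finset.Icc s0 (s0 + (2 * f + 1)),
            v j ∈ C a b ∪ {a, b} := by
          intro j hj
          rw [Finset.mem_Icc] at hj
          rcases Classical.em (v j ∈ C a b) with h | h
          · exact Or.inl h
          · rcases Classical.em (v j = a) with h2 | h2
            · exact Or.inr (Or.inl h2)
            · exact Or.inr (Or.inr (hcon j hj h h2))
        have hinjW : Set.InjOn v (Finset.Icc s0 (s0 + (2 * f + 1)) : Set ℕ) := by
          intro x hx y hy hxy
          simp only [Finset.coe_Icc, Set.mem_Icc] at hx hy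
          exact hinj x (by omega) y (by omega) hxy
        have hcard1 : (v '' (Finset.Icc s0 (s0 + (2 * f + 1)) : Set ℕ)).ncard
            = 2 * f + 2 := by
          rw [Set.ncard_image_of_injOn hinjW, Set.ncard_coe_finset, Nat.card_Icc]
          omega
        have hcard2 : (v '' (Finset.Icc s0 (s0 + (2 * f + 1)) : Set ℕ)).ncard
            ≤ (C a b ∪ {a, b}).ncard := by
          refine Set.ncard_le_ncard ?_ (Set.toFinite _)
          rintro x ⟨j, hj, rfl⟩
          exact hmap j (by simpa using hj)
        have hcard3 : (C a b ∪ {a, b} : Set V).ncard ≤ 2 * f + 1 := by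
          have h1 := Set.ncard_union_le (C a b) ({a, b} : Set V)
          have h2 : ({a, b} : Set V).ncard ≤ 2 := by
            have := Set.ncard_insert_le a ({b} : Set V)
            simpa using this
          have h3 := hCcard a b hab
          omega
        omega
      have hdet : dist a c + dist c b ≤ dist a (v j) + dist (v j) b :=
        hCmin a b hab c hc (v j) hja hjb hjC
      -- the edges of the detour exist in G \ F
      have hGac : (G.deleteEdges F).Adj a c := by
        rw [SimpleGraph.deleteEdges_adj]
        exact ⟨(hG a c).mpr (Or.inr ⟨a, b, hab, Or.inl ⟨rfl, hc⟩⟩), hcA⟩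
      have hGcb : (G.deleteEdges F).Adj c b := by
        rw [SimpleGraph.deleteEdges_adj]
        exact ⟨(hG c b).mpr (Or.inr ⟨a, b, hab, Or.inr (Or.inr (Or.inr ⟨rfl, hc⟩))⟩), hcB⟩
      refine ⟨SimpleGraph.Walk.cons hGac (SimpleGraph.Walk.cons hGcb SimpleGraph.Walk.nil), ?_⟩
      rw [wlen_cons, wlen_cons, wlen_nil, add_zero]
      -- bound the two distances by path sums within the window B i
      have hsub1 : Finset.Ico (min i j) (max i j) ⊆ B i := by
        intro m hm
        simp only [Finset.mem_Ico, le_min_iff, min_le_iff, lt_max_iff, max_lt_iff] at hm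
        simp only [hBdef, Finset.mem_filter, Finset.mem_range]
        omega
      have hsub2 : Finset.Ico (min (i + 1) j) (max (i + 1) j) ⊆ B i := by
        intro m hm
        simp only [Finset.mem_Ico, le_min_iff, min_le_iff, lt_max_iff, max_lt_iff] at hm
        simp only [hBdef, Finset.mem_filter, Finset.mem_range]
        omega
      calc dist a c + dist c b ≤ dist a (v j) + dist (v j) b := hdet
        _ ≤ (∑ m ∈ Finset.Ico (min i j) (max i j), d m)
              + ∑ m ∈ Finset.Ico (min (i + 1) j) (max (i + 1) j), d m := by
            exact add_le_add (htri2 i j) (by rw [dist_comm]; exact htri2 (i + 1) j)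
        _ ≤ (∑ m ∈ B i, d m) + ∑ m ∈ B i, d m := by
            exact add_le_add
              (Finset.sum_le_sum_of_subset_of_nonneg hsub1 fun m _ _ => hd0 m)
              (Finset.sum_le_sum_of_subset_of_nonneg hsub2 fun m _ _ => hd0 m)
        _ = 2 * ∑ m ∈ B i, d m := by ring
    · -- direct edge survives
      have hGab : (G.deleteEdges F).Adj (v i) (v (i + 1)) := by
        rw [SimpleGraph.deleteEdges_adj]
        exact ⟨(hG _ _).mpr (Or.inl hab), hdir⟩
      refine ⟨SimpleGraph.Walk.cons hGab SimpleGraph.Walk.nil, ?_⟩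
      rw [wlen_cons, wlen_nil, add_zero]
      calc dist (v i) (v (i + 1)) = d i := rfl
        _ ≤ ∑ m ∈ B i, d m := hdB
        _ ≤ 2 * ∑ m ∈ B i, d m := by linarith
  -- assemble the walk
  have build : ∀ j i, i + j = k → ∃ w : (G.deleteEdges F).Walk (v i) (v k),
      wlen w ≤ ∑ m ∈ Finset.Ico i k, 2 * ∑ m' ∈ B m, d m' := by
    intro j
    induction j with
    | zero =>
      intro i hik
      have : i = k := by omega
      subst this
      exact ⟨SimpleGraph.Walk.nil, by simp [wlen_nil]⟩
    | succ j ih =>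
      intro i hik
      have hi : i < k := by omega
      obtain ⟨w1, hw1⟩ := step i hi
      obtain ⟨w2, hw2⟩ := ih (i + 1) (by omega)
      refine ⟨w1.append w2, ?_⟩
      rw [wlen_append, Finset.sum_eq_sum_Ico_succ_bot hi]
      exact add_le_add hw1 hw2
  obtain ⟨w, hw⟩ := build k 0 (by omega)
  have hwpq : wlen (w.copy (P'.getVert_zero) (P'.getVert_length)) = wlen w := by
    have h1 : v 0 = p := P'.getVert_zero
    have h2 : v k = q := P'.getVert_length
    simp [wlen, SimpleGraph.Walk.darts_copy]
  have hgd : gdist (G.deleteEdges F) p q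
      ≤ wlen (w.copy (P'.getVert_zero) (P'.getVert_length)) := by
    apply csInf_le
    · exact ⟨0, by rintro l ⟨w', rfl⟩; exact wlen_nonneg w'⟩
    · exact ⟨_, rfl⟩
  -- double counting
  have h3 : ∀ m' : ℕ,
      ((Finset.range k).filter (fun i => i ≤ m' + 2 * f ∧ m' ≤ i + 2 * f)).card
        ≤ 4 * f + 1 := by
    intro m'
    have hsub : (Finset.range k).filter (fun i => i ≤ m' + 2 * f ∧ m' ≤ i + 2 * f)
        ⊆ Finset.Icc (m' - 2 * f) (m' + 2 * f) := by
      intro i hi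
      simp only [Finset.mem_filter, Finset.mem_range] at hi
      simp only [Finset.mem_Icc]
      omega
    have := Finset.card_le_card hsub
    rw [Nat.card_Icc] at this
    omega
  have h2 : ∑ i ∈ Finset.range k, ∑ m' ∈ B i, d m'
      = ∑ m' ∈ Finset.range k,
          (((Finset.range k).filter (fun i => i ≤ m' + 2 * f ∧ m' ≤ i + 2 * f)).card : ℝ)
            * d m' := by
    simp only [hBdef, Finset.sum_filter]
    rw [Finset.sum_comm]
    refine Finset.sum_congr rfl fun m' _ => ?_
    rw [← Finset.sum_filter, Finset.sum_const, nsmul_eq_mul]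
  have hdouble : ∑ i ∈ Finset.range k, ∑ m' ∈ B i, d m'
      ≤ ((4 * f + 1 : ℕ) : ℝ) * ∑ m ∈ Finset.range k, d m := by
    rw [h2, Finset.mul_sum]
    refine Finset.sum_le_sum fun m' _ => ?_
    have hc : (((Finset.range k).filter
        (fun i => i ≤ m' + 2 * f ∧ m' ≤ i + 2 * f)).card : ℝ)
        ≤ ((4 * f + 1 : ℕ) : ℝ) := by exact_mod_cast h3 m'
    exact mul_le_mul_of_nonneg_right hc (hd0 m')
  have hIco : ∑ m ∈ Finset.Ico 0 k, 2 * ∑ m' ∈ B m, d m'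
      = 2 * ∑ i ∈ Finset.range k, ∑ m' ∈ B i, d m' := by
    rw [← Finset.range_eq_Ico, Finset.mul_sum]
  calc gdist (G.deleteEdges F) p q
      ≤ wlen (w.copy (P'.getVert_zero) (P'.getVert_length)) := hgd
    _ = wlen w := hwpq
    _ ≤ ∑ m ∈ Finset.Ico 0 k, 2 * ∑ m' ∈ B m, d m' := hw
    _ = 2 * ∑ i ∈ Finset.range k, ∑ m' ∈ B i, d m' := hIco
    _ ≤ 2 * (((4 * f + 1 : ℕ) : ℝ) * ∑ m ∈ Finset.range k, d m) := by
        have hsum0 : (0:ℝ) ≤ 2 := by norm_num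
        linarith [hdouble]
    _ = ((8 * f + 2 : ℕ) : ℝ) * ∑ m ∈ Finset.range k, d m := by push_cast; ring
    _ = ((8 * f + 2 : ℕ) : ℝ) * wlen P' := by rw [hwlen]
end
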